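/- Let R be a finite commutative chain ring with residue field F_q, n a positive integer with gcd(n,q)=1, and a, b units with the property that b is a determinant of some n×n circulant matrix. Then for each 0 ≤ s ≤ e (with γ generating the maximal ideal), the number of n×n circulant matrices over R of determinant b·γ^s equals the number of determinant γ^s, and this number is positive. -/

import Mathlib

/-!
Since `gcd(n, q) = 1`, `n` is a unit of the local ring `R`, and the circulant matrix `1 + c • J`
(`J` the all-ones matrix) has determinant `1 + n * c`; so every element of `R` is the determinant of
a circulant matrix. Multiplication by circulant matrices of determinant `b` and `b⁻¹` then injects
each of the two finite sets of circulant matrices into the other.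
-/

open Matrix

theorem isUnit_natCast_of_coprime_of_natCast_eq_zero {S : Type*} [CommRing S] {n q : ℕ}
    (h : n.Coprime q) (hq : (q : S) = 0) : IsUnit (n : S) := by
  obtain ⟨a, b, hab⟩ := Nat.isCoprime_iff_coprime.mpr h
  refine .of_mul_eq_one (a : S) ?_
  have hab' := congrArg (Int.cast : ℤ → S) hab
  push_cast at hab'
  linear_combination hab' - (b : S) * hq

theorem IsLocalRing.isUnit_natCast_of_coprime_card_residueField {R : Type*} [CommRing R]
    [IsLocalRing R] [Finite (R ⧸ maximalIdeal R)] {n : ℕ}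
    (h : n.Coprime (Nat.card (R ⧸ maximalIdeal R))) : IsUnit (n : R) := by
  have := Fintype.ofFinite (R ⧸ maximalIdeal R)
  have hk : IsUnit (n : R ⧸ maximalIdeal R) :=
    isUnit_natCast_of_coprime_of_natCast_eq_zero h
      (by rw [Nat.card_eq_fintype_card]; exact Nat.cast_card_eq_zero _)
  refine IsLocalRing.notMem_maximalIdeal.mp fun hn => hk.ne_zero ?_
  rw [← map_natCast (Ideal.Quotient.mk _)]
  exact Ideal.Quotient.eq_zero_iff_mem.mpr hn

section Circulant

variable {ι R : Type*} [Fintype ι] [DecidableEq ι] [AddGroup ι] [CommRing R]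

theorem det_circulant_single_add_const (c : R) :
    (circulant (Pi.single 0 1 + fun _ : ι => c)).det = 1 + Fintype.card ι * c := by
  have hdecomp : circulant (Pi.single 0 1 + fun _ : ι => c) =
      1 + replicateCol Unit (fun _ : ι => c) * replicateRow Unit (fun _ : ι => (1 : R)) := by
    ext i j
    simp [circulant_apply, one_apply, Pi.single_apply, sub_eq_zero, mul_apply]
  rw [hdecomp, det_one_add_replicateCol_mul_replicateRow]
  simp [dotProduct]

theorem exists_circulant_det_eq (hι : IsUnit (Fintype.card ι : R)) (x : R) :
    ∃ v : ι → R, (circulant v).det = x := by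
  obtain ⟨u, hu⟩ := hι
  refine ⟨Pi.single 0 1 + fun _ => ↑u⁻¹ * (x - 1), ?_⟩
  rw [det_circulant_single_add_const, ← hu, ← mul_assoc, Units.mul_inv, one_mul, add_sub_cancel]

theorem card_circulant_det_le_mul [Finite R] {w : ι → R} (hw : IsUnit (circulant w).det) (x : R) :
    Nat.card {v : ι → R // (circulant v).det = x} ≤
      Nat.card {v : ι → R // (circulant v).det = (circulant w).det * x} := by
  refine Nat.card_le_card_of_injective
    (fun v => ⟨circulant w *ᵥ v.1, by rw [← circulant_mul, det_mul, v.2]⟩) fun v₁ v₂ h => ?_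
  exact Subtype.ext <| mulVec_injective_of_isUnit ((isUnit_iff_isUnit_det _).mpr hw)
    (congrArg Subtype.val h)

theorem card_circulant_det_unit_mul_eq [Finite R] (hι : IsUnit (Fintype.card ι : R)) (u : Rˣ)
    (x : R) :
    Nat.card {v : ι → R // (circulant v).det = u * x} =
      Nat.card {v : ι → R // (circulant v).det = x} := by
  obtain ⟨w, hw⟩ := exists_circulant_det_eq hι (u : R)
  obtain ⟨w', hw'⟩ := exists_circulant_det_eq hι (↑u⁻¹ : R)
  have hle := card_circulant_det_le_mul (hw ▸ u.isUnit) x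
  have hge := card_circulant_det_le_mul (hw' ▸ u⁻¹.isUnit) (u * x)
  rw [hw] at hle
  rw [hw', Units.inv_mul_cancel_left] at hge
  exact le_antisymm hge hle

end Circulant

theorem card_circulant_det_unit_mul_general {R : Type*} [CommRing R] [Finite R] [IsLocalRing R]
    (γ : R)
    (q e n : ℕ) (hq : Nat.card (R ⧸ IsLocalRing.maximalIdeal R) = q)
    [NeZero n] (hgcd : Nat.gcd n q = 1)
    (b : Rˣ) :
    ∀ s ≤ e,
      Nat.card {v : ZMod n → R // (Matrix.circulant v).det = (b : R) * γ ^ s} =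
        Nat.card {v : ZMod n → R // (Matrix.circulant v).det = γ ^ s} ∧
      0 < Nat.card {v : ZMod n → R // (Matrix.circulant v).det = γ ^ s} := by
  intro s _
  have : Finite (R ⧸ IsLocalRing.maximalIdeal R) := ((finite_iff_ideal_quotient _).mp ‹_›).2
  have hn : IsUnit (Fintype.card (ZMod n) : R) := by
    rw [ZMod.card]
    exact IsLocalRing.isUnit_natCast_of_coprime_card_residueField (hq ▸ hgcd)
  obtain ⟨v, hv⟩ := exists_circulant_det_eq hn (γ ^ s)
  exact ⟨card_circulant_det_unit_mul_eq hn b _, Nat.card_pos_iff.mpr ⟨⟨⟨v, hv⟩⟩, inferInstance⟩⟩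

/-- Over a commutative finite chain ring `R` of nilpotency index `e` with residue field of size
`q`, with `gcd(n,q) = 1`: for units `a`, `b` such that `b` is the determinant of some circulant
matrix, and for each `0 ≤ s ≤ e`, the number of `n × n` circulant matrices of determinant
`b·γ^s` equals the number of determinant `γ^s`, and this number is positive. -/
theorem card_circulant_det_unit_mul {R : Type*} [CommRing R] [Finite R] [IsLocalRing R]
    (hchain : ∀ I J : Ideal R, I ≤ J ∨ J ≤ I)
    (γ : R) (hγ : Ideal.span {γ} = IsLocalRing.maximalIdeal R)
    (q e n : ℕ) (hq : Nat.card (R ⧸ IsLocalRing.maximalIdeal R) = q)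
    (he : γ ^ e = 0) (he' : γ ^ (e - 1) ≠ 0)
    [NeZero n] (hgcd : Nat.gcd n q = 1)
    (a b : Rˣ) (hb : ∃ w : ZMod n → R, (Matrix.circulant w).det = (b : R)) :
    ∀ s ≤ e,
      Nat.card {v : ZMod n → R // (Matrix.circulant v).det = (b : R) * γ ^ s} =
        Nat.card {v : ZMod n → R // (Matrix.circulant v).det = γ ^ s} ∧
      0 < Nat.card {v : ZMod n → R // (Matrix.circulant v).det = γ ^ s} :=
  card_circulant_det_unit_mul_general γ q e n hq hgcd b
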